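/- Let λ > 0, J₁ > 0, v₀ ∈ ℝ, and define g(ρ) = (1/π)·∫_{−π/2}^{π/2} S(λ·(v₀ + √J₁·ρ·cos(2x)))·cos(2x) dx. Then g is differentiable at ρ = 0 with g′(0) = (λ·√J₁/2)·S′(λ·v₀); equivalently, √J₁·∂_ρ B₁(v₀, ρ)|_{ρ=0} = λ·(J₁/2)·S′(λ·v₀), where B₁(v₀, ρ) = g(ρ). This quantity equal to 1 is the condition for a pitchfork bifurcation of the tuned stationary solutions. -/

import Mathlib

/-!
Differentiate under the integral sign: `S' = S (1 - S)` is continuous and bounded by `1`, so the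
`ρ`-derivative of the integrand is dominated uniformly in `ρ`. At `ρ = 0` the derivative of the
integral is `S'(λ v₀) · λ √J₁ · ∫ cos² (2x) = S'(λ v₀) · λ √J₁ · π / 2`.
-/

open Real

noncomputable def S (x : ℝ) : ℝ := 1 / (1 + Real.exp (-x))

lemma S_eq_inv (x : ℝ) : S x = (1 + exp (-x))⁻¹ := one_div _

lemma S_pos (x : ℝ) : 0 < S x := by
  rw [S_eq_inv]; positivity

lemma S_lt_one (x : ℝ) : S x < 1 := by
  rw [S_eq_inv]; exact inv_lt_one_of_one_lt₀ (lt_add_of_pos_right 1 (exp_pos _))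

lemma hasDerivAt_S (x : ℝ) : HasDerivAt S (S x * (1 - S x)) x := by
  have hden : HasDerivAt (fun y => 1 + exp (-y)) (-exp (-x)) x := by
    simpa using ((hasDerivAt_neg x).exp).const_add 1
  have h1 : 1 - S x = exp (-x) * S x := by
    rw [S_eq_inv]; field_simp; ring
  have h := hden.inv (by positivity)
  rw [show (fun y => 1 + exp (-y))⁻¹ = S from funext fun y => (S_eq_inv y).symm] at h
  refine h.congr_deriv ?_
  rw [h1, S_eq_inv]; field_simp

lemma deriv_S (x : ℝ) : deriv S x = S x * (1 - S x) := (hasDerivAt_S x).deriv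

lemma continuous_S : Continuous S :=
  continuous_iff_continuousAt.2 fun x => (hasDerivAt_S x).continuousAt

lemma abs_S_mul_one_sub_S_le_one (x : ℝ) : |S x * (1 - S x)| ≤ 1 := by
  have h0 := S_pos x
  have h1 := S_lt_one x
  rw [abs_of_pos (by nlinarith)]
  nlinarith

theorem hasDerivAt_intervalIntegral_comp_add_mul {f f' c w : ℝ → ℝ} {C : ℝ}
    (hf : ∀ y, HasDerivAt f (f' y) y) (hf' : Continuous f') (hf'_le : ∀ y, |f' y| ≤ C)
    (hc : Continuous c) (hw : Continuous w) (v a b ρ₀ : ℝ) :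
    HasDerivAt (fun ρ => ∫ x in a..b, f (v + ρ * c x) * w x)
      (∫ x in a..b, f' (v + ρ₀ * c x) * c x * w x) ρ₀ := by
  have hf_cont : Continuous f := continuous_iff_continuousAt.2 fun y => (hf y).continuousAt
  have hF : ∀ ρ, Continuous fun x => f (v + ρ * c x) * w x := fun ρ =>
    (hf_cont.comp (continuous_const.add (continuous_const.mul hc))).mul hw
  have hF' : Continuous fun x => f' (v + ρ₀ * c x) * c x * w x :=
    ((hf'.comp (continuous_const.add (continuous_const.mul hc))).mul hc).mul hw
  refine (intervalIntegral.hasDerivAt_integral_of_dominated_loc_of_deriv_le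
    (F := fun ρ x => f (v + ρ * c x) * w x) (F' := fun ρ x => f' (v + ρ * c x) * c x * w x)
    (bound := fun x => C * |c x * w x|) Filter.univ_mem
    (Filter.Eventually.of_forall fun ρ => (hF ρ).aestronglyMeasurable)
    ((hF ρ₀).intervalIntegrable _ _) hF'.aestronglyMeasurable
    (Filter.Eventually.of_forall fun x _ ρ _ => ?_)
    ((continuous_const.mul (hc.mul hw).abs).intervalIntegrable _ _)
    (Filter.Eventually.of_forall fun x _ ρ _ => ?_)).2
  · rw [Real.norm_eq_abs, mul_assoc, abs_mul]
    exact mul_le_mul_of_nonneg_right (hf'_le _) (abs_nonneg _)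
  · exact ((hf _).comp ρ ((hasDerivAt_mul_const (c x)).const_add v)).mul_const (w x)

lemma integral_cos_two_mul_sq :
    ∫ x in -(π / 2)..π / 2, cos (2 * x) ^ 2 = π / 2 := by
  rw [intervalIntegral.integral_comp_mul_left (fun x => cos x ^ 2) two_ne_zero, integral_cos_sq]
  have h2 : 2 * (π / 2) = π := by ring
  simp only [h2, mul_neg, cos_pi, sin_pi, cos_neg, sin_neg, mul_zero, neg_zero, sub_self,
    zero_add, sub_neg_eq_add, add_self_div_two, smul_eq_mul]
  field_simp

theorem stmt_12_general (lam J₁ v₀ : ℝ) (hJ₁ : 0 < J₁)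
    (g : ℝ → ℝ)
    (hg : ∀ ρ, g ρ = (1 / π) * ∫ x in (-(π/2))..(π/2),
      S (lam * (v₀ + Real.sqrt J₁ * ρ * Real.cos (2 * x))) * Real.cos (2 * x)) :
    HasDerivAt g (lam * Real.sqrt J₁ / 2 * deriv S (lam * v₀)) 0 ∧
    Real.sqrt J₁ * deriv g 0 = lam * (J₁ / 2) * deriv S (lam * v₀) := by
  set c : ℝ → ℝ := fun x => lam * Real.sqrt J₁ * cos (2 * x)
  have hg' : g = fun ρ =>
      (1 / π) * ∫ x in -(π / 2)..π / 2, S (lam * v₀ + ρ * c x) * cos (2 * x) := by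
    funext ρ; rw [hg]; congr 2; funext x; congr 2; ring
  have hcos : Continuous fun x => cos (2 * x) := continuous_cos.comp (continuous_const_mul 2)
  have hderiv := (hasDerivAt_intervalIntegral_comp_add_mul (c := c) hasDerivAt_S
    (continuous_S.mul (continuous_const.sub continuous_S)) abs_S_mul_one_sub_S_le_one
    (continuous_const.mul hcos) hcos (lam * v₀) (-(π / 2)) (π / 2) 0).const_mul (1 / π)
  have hint : ∫ x in -(π / 2)..π / 2,
      S (lam * v₀ + 0 * c x) * (1 - S (lam * v₀ + 0 * c x)) * c x * cos (2 * x)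
        = deriv S (lam * v₀) * (lam * Real.sqrt J₁) * (π / 2) := by
    simp only [zero_mul, add_zero, c, ← deriv_S]
    calc _ = ∫ x in -(π / 2)..π / 2, deriv S (lam * v₀) * (lam * √J₁) * cos (2 * x) ^ 2 := by
          congr 1; funext x; ring
      _ = _ := by rw [intervalIntegral.integral_const_mul, integral_cos_two_mul_sq]
  have hmain : HasDerivAt g (lam * Real.sqrt J₁ / 2 * deriv S (lam * v₀)) 0 := by
    rw [hg']
    refine hderiv.congr_deriv ?_
    rw [hint]; field_simp
  refine ⟨hmain, ?_⟩
  rw [hmain.deriv]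
  linear_combination lam / 2 * deriv S (lam * v₀) * Real.mul_self_sqrt hJ₁.le

/-- the derivative at `ρ = 0` of `ρ ↦ B₁(v₀, ρ)` equals
`(λ·√J₁/2)·S′(λ·v₀)`; setting `√J₁` times it equal to `1` is the pitchfork condition. -/
theorem stmt_12 (lam J₁ v₀ : ℝ) (hlam : 0 < lam) (hJ₁ : 0 < J₁)
    (g : ℝ → ℝ)
    (hg : ∀ ρ, g ρ = (1 / π) * ∫ x in (-(π/2))..(π/2),
      S (lam * (v₀ + Real.sqrt J₁ * ρ * Real.cos (2 * x))) * Real.cos (2 * x)) :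
    HasDerivAt g (lam * Real.sqrt J₁ / 2 * deriv S (lam * v₀)) 0 ∧
    Real.sqrt J₁ * deriv g 0 = lam * (J₁ / 2) * deriv S (lam * v₀) :=
  stmt_12_general lam J₁ v₀ hJ₁ g hg
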